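/- arXiv:2408.03473 — 3 statements merged into one kernel-verified Lean document; each statement's English description precedes it below -/
import Mathlib

section
/- Let t ≥ 1 and s ≥ 3 be integers, let 1 ≤ a < b be integers with s^a > 2t, and let N be the positive integer with N + 1 = ⌊s^a / t⌋. Let 𝒟 ⊆ {0,1,…,s−1} be a digit set with 0 ∈ 𝒟 and s−1 ∉ 𝒟, let ε ∈ (0,1), and set 𝔅(ξ) := ε 𝔅*(ξ) + (1 − ε) ℭ(ξ) and 𝔉(ξ) := 𝔄(ξ; N, s, a) · 𝔅(ξ). Then for every ξ ∈ ℤ with 1 ≤ |ξ| < s^b, one has |𝔉(ξ)| ≤ ε + (s^{a−b}/N) · |sin(π ξ s^{−b})|^{−1}. -/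
open Finset

/-- `e(y) = exp(-2πi y)`. -/
noncomputable def eneg (y : ℝ) : ℂ := Complex.exp (-(2 * Real.pi * Complex.I * (y : ℂ)))

/-- `1̂(θ) = ∫₀¹ e(xθ) dx`. -/
noncomputable def oneHat (θ : ℝ) : ℂ := ∫ x in (0:ℝ)..1, eneg (x * θ)

/-- The `j`-th base-`s` digit of the natural number `n`. -/
def digitOf (s n j : ℕ) : ℕ := n / s ^ j % s

/-- `𝔄(ξ; N, s, a) = N⁻¹ Σ_{k<N} e(ξ k s^{-a})`. -/
noncomputable def Afun (N s a : ℕ) (ξ : ℤ) : ℂ :=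
  (N : ℂ)⁻¹ * ∑ k ∈ Finset.range N, eneg ((ξ : ℝ) * k / (s : ℝ) ^ a)

/-- `ℭ(ξ) = s^{a-b} Σ_{ℓ < s^{b-a}} e(ξ ℓ s^{-b})`. -/
noncomputable def Cfun (s a b : ℕ) (ξ : ℤ) : ℂ :=
  (((s : ℝ) ^ a / (s : ℝ) ^ b : ℝ) : ℂ) *
    ∑ ℓ ∈ Finset.range (s ^ (b - a)), eneg ((ξ : ℝ) * ℓ / (s : ℝ) ^ b)

/-- `𝕃*`: the set of `ℓ < s^{b-a}` all of whose `b-a` base-`s` digits lie in `D`. -/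
def Lstar (s a b : ℕ) (D : Finset ℕ) : Finset ℕ :=
  (Finset.range (s ^ (b - a))).filter fun ℓ => ∀ j < b - a, digitOf s ℓ j ∈ D

/-- `𝔅*(ξ) = r^{a-b} Σ_{ℓ ∈ 𝕃*} e(ξ ℓ s^{-b})`, where `r = #D`. -/
noncomputable def Bstar (s a b : ℕ) (D : Finset ℕ) (ξ : ℤ) : ℂ :=
  (((D.card : ℝ) ^ a / (D.card : ℝ) ^ b : ℝ) : ℂ) *
    ∑ ℓ ∈ Lstar s a b D, eneg ((ξ : ℝ) * ℓ / (s : ℝ) ^ b)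

/-- `g(ξ, k; s, 𝒜) = (#𝒜)⁻¹ Σ_{d ∈ 𝒜} e(ξ d s^{-k})`. -/
noncomputable def gfun (s : ℕ) (A : Finset ℕ) (ξ : ℤ) (k : ℕ) : ℂ :=
  (A.card : ℂ)⁻¹ * ∑ d ∈ A, eneg ((ξ : ℝ) * d / (s : ℝ) ^ k)

/-! With `w = e(ξ s^{-b})`, the product `𝔄 · ℭ` collapses to `N⁻¹ s^{a-b}` times the geometric
sum `∑_{m < N s^{b-a}} w^m`, whose modulus is at most `2 / |w - 1| = |sin(π ξ s^{-b})|⁻¹`. On the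
other hand `|𝔄| ≤ 1` trivially and `|𝔅*| ≤ 1` because `#𝕃* ≤ r^{b-a}` (an element of `𝕃*` is
determined by its digits), so the `ε`-part contributes at most `ε`. -/

lemma eneg_eq_exp_mul_I (y : ℝ) : eneg y = Complex.exp (Complex.I * (-(2 * Real.pi * y) : ℝ)) := by
  unfold eneg; congr 1; push_cast; ring

lemma norm_eneg (y : ℝ) : ‖eneg y‖ = 1 := by
  rw [eneg_eq_exp_mul_I, mul_comm]; exact Complex.norm_exp_ofReal_mul_I _

lemma eneg_nat_mul (m : ℕ) (y : ℝ) : eneg (m * y) = eneg y ^ m := by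
  unfold eneg; rw [← Complex.exp_nat_mul]; congr 1; push_cast; ring

lemma norm_eneg_sub_one (y : ℝ) : ‖eneg y - 1‖ = 2 * |Real.sin (Real.pi * y)| := by
  rw [eneg_eq_exp_mul_I, Complex.norm_exp_I_mul_ofReal_sub_one, norm_mul, Real.norm_two,
    Real.norm_eq_abs, neg_div, Real.sin_neg, abs_neg]
  ring_nf

lemma norm_sum_eneg_le_card {ι : Type*} (I : Finset ι) (f : ι → ℝ) :
    ‖∑ i ∈ I, eneg (f i)‖ ≤ #I :=
  (norm_sum_le _ _).trans_eq (by simp [norm_eneg])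

lemma geom_sum_pow_mul_geom_sum {R : Type*} [CommSemiring R] (w : R) (N M : ℕ) :
    (∑ k ∈ range N, (w ^ M) ^ k) * ∑ l ∈ range M, w ^ l = ∑ m ∈ range (N * M), w ^ m := by
  induction N with
  | zero => simp
  | succ N ih =>
    rw [sum_range_succ, add_mul, ih, Nat.succ_mul, sum_range_add, mul_sum]
    simp only [← pow_mul, ← pow_add, Nat.mul_comm M N]

lemma norm_geom_sum_le {w : ℂ} (hw : ‖w‖ = 1) (hw1 : w ≠ 1) (n : ℕ) :
    ‖∑ m ∈ range n, w ^ m‖ ≤ 2 / ‖w - 1‖ := by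
  rw [geom_sum_eq hw1, norm_div]
  gcongr
  calc ‖w ^ n - 1‖ ≤ ‖w ^ n‖ + ‖(1 : ℂ)‖ := norm_sub_le _ _
    _ = 2 := by rw [norm_pow, hw, one_pow, norm_one]; norm_num

lemma sin_pi_mul_div_ne_zero {ξ q : ℤ} (hξ : ξ ≠ 0) (hq : |ξ| < q) :
    Real.sin (Real.pi * ξ / q) ≠ 0 := by
  have hq0 : (0 : ℝ) < q := by exact_mod_cast (abs_nonneg ξ).trans_lt hq
  have hlt : |(ξ : ℝ) / q| < 1 := by
    rw [abs_div, abs_of_pos hq0, div_lt_one hq0]; exact_mod_cast hq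
  have hπ : |Real.pi * (ξ / q)| < Real.pi := by
    rw [abs_mul, abs_of_pos Real.pi_pos]; exact mul_lt_of_lt_one_right Real.pi_pos hlt
  rw [mul_div_assoc, ne_eq, Real.sin_eq_zero_iff_of_lt_of_lt (abs_lt.mp hπ).1 (abs_lt.mp hπ).2]
  simp [Real.pi_ne_zero, hξ, hq0.ne']

lemma eq_of_digitOf_eq {s : ℕ} : ∀ {n x y : ℕ}, x < s ^ n → y < s ^ n →
    (∀ j < n, digitOf s x j = digitOf s y j) → x = y
  | 0, x, y, hx, hy, _ => by rw [pow_zero] at hx hy; omega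
  | n + 1, x, y, hx, hy, h => by
    have hs : 0 < s := Nat.pos_of_ne_zero fun h0 => by simp [h0] at hx
    have hshift : ∀ z j, digitOf s z (j + 1) = digitOf s (z / s) j := fun z j => by
      rw [digitOf, digitOf, pow_succ', Nat.div_div_eq_div_mul]
    have hdiv : x / s = y / s :=
      eq_of_digitOf_eq (Nat.div_lt_of_lt_mul (pow_succ' s n ▸ hx))
        (Nat.div_lt_of_lt_mul (pow_succ' s n ▸ hy))
        fun j hj => by rw [← hshift, ← hshift]; exact h (j + 1) (by omega)
    have hmod : x % s = y % s := by simpa [digitOf] using h 0 (by omega)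
    rw [← Nat.div_add_mod x s, ← Nat.div_add_mod y s, hdiv, hmod]

lemma card_Lstar_le (s a b : ℕ) (D : Finset ℕ) : #(Lstar s a b D) ≤ #D ^ (b - a) := by
  calc #(Lstar s a b D) ≤ #(Fintype.piFinset fun _ : Fin (b - a) => D) := by
        refine card_le_card_of_injOn (fun ℓ (j : Fin (b - a)) => digitOf s ℓ j) ?_ ?_
        · intro ℓ hℓ
          exact Fintype.mem_piFinset.mpr fun j => (mem_filter.mp hℓ).2 j j.isLt
        · intro x hx y hy hxy
          simp only [Lstar, coe_filter, mem_range, Set.mem_ofPred_eq] at hx hy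
          exact eq_of_digitOf_eq hx.1 hy.1 fun j hj => congrFun hxy ⟨j, hj⟩
    _ = #D ^ (b - a) := by simp

lemma norm_Afun_le_one (N s a : ℕ) (ξ : ℤ) : ‖Afun N s a ξ‖ ≤ 1 := by
  rw [Afun, norm_mul, norm_inv, Complex.norm_natCast]
  calc (N : ℝ)⁻¹ * ‖∑ k ∈ range N, eneg (ξ * k / s ^ a)‖ ≤ (N : ℝ)⁻¹ * N := by
        gcongr; simpa using norm_sum_eneg_le_card (range N) _
    _ ≤ 1 := inv_mul_le_one_of_le₀ le_rfl (Nat.cast_nonneg N)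

lemma norm_Bstar_le_one {a b : ℕ} (s : ℕ) (hab : a ≤ b) {D : Finset ℕ} (hD : D.Nonempty)
    (ξ : ℤ) : ‖Bstar s a b D ξ‖ ≤ 1 := by
  have hr : (#D : ℝ) ≠ 0 := by exact_mod_cast hD.card_pos.ne'
  rw [Bstar, norm_mul, Complex.norm_real, Real.norm_of_nonneg (by positivity)]
  calc (#D : ℝ) ^ a / #D ^ b * ‖∑ ℓ ∈ Lstar s a b D, eneg (ξ * ℓ / s ^ b)‖
      ≤ (#D : ℝ) ^ a / #D ^ b * #D ^ (b - a) := by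
        gcongr
        exact (norm_sum_eneg_le_card _ _).trans (by exact_mod_cast card_Lstar_le s a b D)
    _ = 1 := by
      rw [div_mul_eq_mul_div, ← pow_add, Nat.add_sub_cancel' hab, div_self (pow_ne_zero _ hr)]

lemma Afun_mul_Cfun {s a b : ℕ} (N : ℕ) (hs : s ≠ 0) (hab : a ≤ b) (ξ : ℤ) :
    Afun N s a ξ * Cfun s a b ξ = ((N : ℂ)⁻¹ * (((s : ℝ) ^ a / (s : ℝ) ^ b : ℝ) : ℂ)) *
      ∑ m ∈ range (N * s ^ (b - a)), eneg (ξ / (s : ℝ) ^ b) ^ m := by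
  have hsb : (s : ℝ) ^ b = s ^ a * s ^ (b - a) := by rw [← pow_add, Nat.add_sub_cancel' hab]
  have hpow : ∀ m : ℕ, eneg (ξ * m / (s : ℝ) ^ b) = eneg (ξ / (s : ℝ) ^ b) ^ m := fun m => by
    rw [← eneg_nat_mul]; ring_nf
  have hcoarse : ∀ k : ℕ,
      eneg (ξ * k / (s : ℝ) ^ a) = (eneg (ξ / (s : ℝ) ^ b) ^ s ^ (b - a)) ^ k := fun k => by
    have : (s : ℝ) ^ (b - a) ≠ 0 := by positivity
    rw [← pow_mul, ← hpow, hsb, Nat.cast_mul, Nat.cast_pow]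
    congr 1
    field_simp
  rw [Afun, Cfun, ← geom_sum_pow_mul_geom_sum, sum_congr rfl fun k _ => hcoarse k,
    sum_congr rfl fun ℓ _ => hpow ℓ]
  ring

lemma norm_Afun_mul_Cfun_le {s a b : ℕ} (N : ℕ) (hab : a ≤ b) {ξ : ℤ} (hξ : ξ ≠ 0)
    (hξs : |ξ| < (s : ℤ) ^ b) :
    ‖Afun N s a ξ * Cfun s a b ξ‖ ≤
      ((s : ℝ) ^ a / (s : ℝ) ^ b) / N * |Real.sin (Real.pi * ξ / (s : ℝ) ^ b)|⁻¹ := by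
  have hs : s ≠ 0 := by
    rintro rfl
    have := abs_pos.mpr hξ
    rcases b with _ | b <;> simp at hξs <;> omega
  have hsin : Real.sin (Real.pi * ξ / (s : ℝ) ^ b) ≠ 0 := by
    exact_mod_cast sin_pi_mul_div_ne_zero hξ hξs
  set w := eneg (ξ / (s : ℝ) ^ b)
  have hw : ‖w - 1‖ = 2 * |Real.sin (Real.pi * ξ / (s : ℝ) ^ b)| := by
    rw [norm_eneg_sub_one, mul_div_assoc]
  have hw1 : w ≠ 1 := fun h => by simp [h, hsin] at hw
  rw [Afun_mul_Cfun N hs hab, norm_mul, norm_mul, norm_inv, Complex.norm_natCast,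
    Complex.norm_real, Real.norm_of_nonneg (by positivity), inv_mul_eq_div]
  gcongr
  calc ‖∑ m ∈ range (N * s ^ (b - a)), w ^ m‖ ≤ 2 / ‖w - 1‖ :=
        norm_geom_sum_le (norm_eneg _) hw1 _
    _ = |Real.sin (Real.pi * ξ / (s : ℝ) ^ b)|⁻¹ := by
      rw [hw]; field_simp

theorem single_scale_product_estimate_general (s a b N : ℕ)
    (hab : a < b)
    (D : Finset ℕ) (h0 : 0 ∈ D)
    (ε : ℝ) (hε : ε ∈ Set.Ioo (0 : ℝ) 1)
    (ξ : ℤ) (hξ1 : 1 ≤ |ξ|) (hξ2 : |ξ| < (s : ℤ) ^ b) :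
    ‖Afun N s a ξ * ((ε : ℂ) * Bstar s a b D ξ + ((1 - ε : ℝ) : ℂ) * Cfun s a b ξ)‖ ≤
      ε + ((s : ℝ) ^ a / (s : ℝ) ^ b) / N * |Real.sin (Real.pi * (ξ : ℝ) / (s : ℝ) ^ b)|⁻¹ := by
  obtain ⟨hε0, hε1⟩ := hε
  have hAB : ‖Afun N s a ξ * Bstar s a b D ξ‖ ≤ 1 := by
    rw [norm_mul]
    exact mul_le_one₀ (norm_Afun_le_one N s a ξ) (norm_nonneg _)
      (norm_Bstar_le_one s hab.le ⟨0, h0⟩ ξ)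
  have hAC := norm_Afun_mul_Cfun_le N hab.le (abs_pos.mp (by omega)) hξ2
  calc _ = ‖(ε : ℂ) * (Afun N s a ξ * Bstar s a b D ξ) +
          ((1 - ε : ℝ) : ℂ) * (Afun N s a ξ * Cfun s a b ξ)‖ := by congr 1; ring
    _ ≤ ε * ‖Afun N s a ξ * Bstar s a b D ξ‖ + (1 - ε) * ‖Afun N s a ξ * Cfun s a b ξ‖ := by
      refine (norm_add_le _ _).trans_eq ?_
      rw [norm_mul (ε : ℂ), norm_mul ((1 - ε : ℝ) : ℂ), Complex.norm_real, Complex.norm_real,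
        Real.norm_of_nonneg hε0.le, Real.norm_of_nonneg (by linarith)]
    _ ≤ ε + _ := by nlinarith [norm_nonneg (Afun N s a ξ * Cfun s a b ξ)]

/-- Lemma 6.6 (Pramanik–Zhang): single-scale estimate for the product
`𝔉 = 𝔄 · (ε 𝔅* + (1−ε) ℭ)`. For `1 ≤ |ξ| < s^b`,
`|𝔉(ξ)| ≤ ε + (s^{a−b}/N) |sin(π ξ s^{−b})|⁻¹`. -/
theorem single_scale_product_estimate (t s a b N : ℕ)
    (ht : 1 ≤ t) (hs : 3 ≤ s) (ha : 1 ≤ a) (hab : a < b)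
    (hsa : 2 * t < s ^ a) (hN : N + 1 = s ^ a / t)
    (D : Finset ℕ) (hD : D ⊆ Finset.range s) (h0 : 0 ∈ D) (hs1 : s - 1 ∉ D)
    (ε : ℝ) (hε : ε ∈ Set.Ioo (0 : ℝ) 1)
    (ξ : ℤ) (hξ1 : 1 ≤ |ξ|) (hξ2 : |ξ| < (s : ℤ) ^ b) :
    ‖Afun N s a ξ * ((ε : ℂ) * Bstar s a b D ξ + ((1 - ε : ℝ) : ℂ) * Cfun s a b ξ)‖ ≤
      ε + ((s : ℝ) ^ a / (s : ℝ) ^ b) / N * |Real.sin (Real.pi * (ξ : ℝ) / (s : ℝ) ^ b)|⁻¹ :=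
  single_scale_product_estimate_general s a b N hab D h0 ε hε ξ hξ1 hξ2
end

section
/- There exists an absolute constant c₀ > 0 with the following property. Let s ≥ 2 be an integer, let ξ ∈ ℤ ∖ {0} with base-s digits d_j(|ξ|), and suppose j ≥ 1 is an index such that 1 ≤ d_{j−1}(|ξ|) + d_j(|ξ|)·s ≤ s² − 2. Then for every digit set 𝒜 ⊆ {0,1,…,s−1} with {0,1} ⊆ 𝒜 and r := #𝒜, one has |g(ξ, j+1; s, 𝒜)| ≤ 1 − c₀/(r s⁴) < 1. -/
open Finset

lemma eneg_zero : eneg 0 = 1 := by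
  simp [eneg]

lemma eneg_neg (y : ℝ) : eneg (-y) = starRingEnd ℂ (eneg y) := by
  rw [eneg, eneg, ← Complex.exp_conj]
  congr 1
  simp [Complex.conj_ofReal, map_ofNat]

lemma norm_one_add_eneg_neg (y : ℝ) : ‖1 + eneg (-y)‖ = ‖1 + eneg y‖ := by
  rw [eneg_neg, ← Complex.norm_conj, map_add, map_one, Complex.conj_conj]

lemma norm_one_add_eneg_abs (y : ℝ) : ‖1 + eneg |y|‖ = ‖1 + eneg y‖ := by
  rcases abs_choice y with h | h <;> rw [h]
  exact norm_one_add_eneg_neg y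

lemma re_eneg (y : ℝ) : (eneg y).re = Real.cos (2 * Real.pi * y) := by
  rw [eneg, show -(2 * Real.pi * Complex.I * y) = ((-(2 * Real.pi * y) : ℝ) : ℂ) * Complex.I by
    push_cast; ring, Complex.exp_ofReal_mul_I_re, Real.cos_neg]

lemma norm_one_add_eneg_sq (y : ℝ) :
    ‖1 + eneg y‖ ^ 2 = 2 + 2 * Real.cos (2 * Real.pi * y) := by
  rw [Complex.sq_norm, Complex.normSq_add, Complex.normSq_one, ← Complex.sq_norm, norm_eneg]
  simp only [one_pow, one_mul, Complex.conj_re, re_eneg, add_left_inj]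
  ring

lemma cos_two_pi_mul_le {ε y : ℝ} (hε : 0 ≤ ε) (h₁ : ε ≤ Int.fract y)
    (h₂ : Int.fract y ≤ 1 - ε) : Real.cos (2 * Real.pi * y) ≤ 1 - 8 * ε ^ 2 := by
  have hπ := Real.pi_pos
  have hcentered : ∀ t : ℝ, |t| ≤ 1 / 2 → ε ≤ |t| →
      Real.cos (2 * Real.pi * t) ≤ 1 - 8 * ε ^ 2 := by
    intro t ht hεt
    have hx : |2 * Real.pi * t| ≤ Real.pi := by
      rw [abs_mul, abs_of_pos (by positivity)]
      nlinarith
    have hquad : 2 / Real.pi ^ 2 * (2 * Real.pi * t) ^ 2 = 8 * |t| ^ 2 := by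
      field_simp
      rw [sq_abs]
      ring
    have := Real.cos_le_one_sub_mul_cos_sq hx
    nlinarith
  have hfract : Real.cos (2 * Real.pi * y) = Real.cos (2 * Real.pi * Int.fract y) := by
    rw [Int.fract, mul_sub, mul_comm _ (⌊y⌋ : ℝ), Real.cos_sub_int_mul_two_pi]
  rw [hfract]
  rcases le_or_gt (Int.fract y) (1 / 2) with h | h
  · have hf := Int.fract_nonneg y
    exact hcentered _ (by rw [abs_of_nonneg hf]; exact h) (by rw [abs_of_nonneg hf]; exact h₁)
  · rw [← Real.cos_sub_two_pi, show 2 * Real.pi * Int.fract y - 2 * Real.pi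
      = 2 * Real.pi * (Int.fract y - 1) by ring]
    have hf := Int.fract_lt_one y
    exact hcentered _ (by rw [abs_of_neg (by linarith)]; linarith)
      (by rw [abs_of_neg (by linarith)]; linarith)

lemma norm_one_add_eneg_le {ε y : ℝ} (hε : 0 ≤ ε) (h₁ : ε ≤ Int.fract y)
    (h₂ : Int.fract y ≤ 1 - ε) : ‖1 + eneg y‖ ≤ 2 - 4 * ε ^ 2 := by
  have hε2 : ε ≤ 1 / 2 := by linarith
  have hsq : ‖1 + eneg y‖ ^ 2 ≤ (2 - 4 * ε ^ 2) ^ 2 := by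
    rw [norm_one_add_eneg_sq]
    nlinarith [cos_two_pi_mul_le hε h₁ h₂, sq_nonneg ε]
  exact (pow_le_pow_iff_left₀ (norm_nonneg _) (by nlinarith) two_ne_zero).1 hsq

lemma norm_sum_le_card_sub {E ι : Type*} [SeminormedAddCommGroup E] [DecidableEq ι]
    {s : Finset ι} {f : ι → E} {a b : ι} {δ : ℝ} (hf : ∀ i ∈ s, ‖f i‖ ≤ 1)
    (ha : a ∈ s) (hb : b ∈ s) (hab : a ≠ b) (h : ‖f a + f b‖ ≤ 2 - δ) :
    ‖∑ i ∈ s, f i‖ ≤ s.card - δ := by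
  have hsub : {a, b} ⊆ s := Finset.insert_subset ha (Finset.singleton_subset_iff.2 hb)
  have hcard : ((s \ {a, b}).card : ℝ) + 2 = s.card := by
    have := Finset.card_sdiff_add_card_eq_card hsub
    rw [Finset.card_pair hab] at this
    exact_mod_cast this
  have hrest : ‖∑ i ∈ s \ {a, b}, f i‖ ≤ (s \ {a, b}).card := by
    simpa using norm_sum_le_of_le (s \ {a, b}) fun i hi => hf i (Finset.sdiff_subset hi)
  rw [← Finset.sum_sdiff hsub, Finset.sum_pair hab]
  linarith [norm_add_le (∑ i ∈ s \ {a, b}, f i) (f a + f b)]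

lemma digitOf_add_digitOf_succ_mul (s n i : ℕ) :
    digitOf s n i + digitOf s n (i + 1) * s = n / s ^ i % s ^ 2 := by
  rw [digitOf, digitOf, pow_succ, ← Nat.div_div_eq_div_mul, sq, Nat.mod_mul]
  ring

lemma pow_le_mod_pow_add_two {s n i : ℕ} (hs : 2 ≤ s)
    (hlo : 1 ≤ digitOf s n i + digitOf s n (i + 1) * s)
    (hhi : digitOf s n i + digitOf s n (i + 1) * s ≤ s ^ 2 - 2) :
    s ^ i ≤ n % s ^ (i + 2) ∧ n % s ^ (i + 2) + s ^ i ≤ s ^ (i + 2) := by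
  rw [digitOf_add_digitOf_succ_mul] at hlo hhi
  have hsplit : n % s ^ (i + 2) = n % s ^ i + s ^ i * (n / s ^ i % s ^ 2) := by
    rw [pow_add, Nat.mod_mul]
  rw [hsplit, pow_add]
  generalize n / s ^ i % s ^ 2 = m at hlo hhi ⊢
  have hmod : n % s ^ i < s ^ i := Nat.mod_lt _ (by positivity)
  have hs2 : 4 ≤ s ^ 2 := by nlinarith
  have hlow : s ^ i ≤ s ^ i * m := Nat.le_mul_of_pos_right _ hlo
  have hupp : s ^ i * (m + 2) ≤ s ^ i * s ^ 2 := Nat.mul_le_mul_left _ (by omega)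
  exact ⟨hlow.trans (Nat.le_add_left _ _), by linarith⟩

lemma fract_div_pow_bounds {s n i : ℕ} (hs : 2 ≤ s)
    (hlo : 1 ≤ digitOf s n i + digitOf s n (i + 1) * s)
    (hhi : digitOf s n i + digitOf s n (i + 1) * s ≤ s ^ 2 - 2) :
    1 / (s : ℝ) ^ 2 ≤ Int.fract ((n : ℝ) / (s : ℝ) ^ (i + 2)) ∧
      Int.fract ((n : ℝ) / (s : ℝ) ^ (i + 2)) ≤ 1 - 1 / (s : ℝ) ^ 2 := by
  obtain ⟨h₁, h₂⟩ := pow_le_mod_pow_add_two hs hlo hhi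
  rw [show (s : ℝ) ^ (i + 2) = ((s ^ (i + 2) : ℕ) : ℝ) by push_cast; rfl,
    Int.fract_div_natCast_eq_div_natCast_mod]
  generalize n % s ^ (i + 2) = R at h₁ h₂ ⊢
  have h₁' : (s : ℝ) ^ i ≤ R := by exact_mod_cast h₁
  have h₂' : (R : ℝ) + (s : ℝ) ^ i ≤ (s : ℝ) ^ i * (s : ℝ) ^ 2 := by
    rw [← pow_add]; exact_mod_cast h₂
  have hpos : (0 : ℝ) < (s : ℝ) ^ i := by positivity
  have hs0 : (0 : ℝ) < (s : ℝ) ^ 2 := by positivity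
  push_cast
  rw [pow_add]
  constructor
  · rw [div_le_div_iff₀ hs0 (by positivity)]
    nlinarith
  · rw [div_le_iff₀ (by positivity)]
    field_simp
    nlinarith

/-- Lemma 11.1(a) (Pramanik–Zhang): there is an absolute constant `c₀ > 0` such that
if the pair of adjacent base-`s` digits of `|ξ|` at positions `j−1, j` is not
extremal (i.e. `1 ≤ d_{j−1} + d_j s ≤ s² − 2`), then for any digit set `𝒜`
containing `0` and `1`, `|g(ξ, j+1; s, 𝒜)| ≤ 1 − c₀/(r s⁴) < 1`. -/
theorem gfun_nontrivial_bound :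
    ∃ c₀ : ℝ, 0 < c₀ ∧
      ∀ s : ℕ, 2 ≤ s → ∀ ξ : ℤ, ξ ≠ 0 → ∀ j : ℕ, 1 ≤ j →
        1 ≤ digitOf s ξ.natAbs (j - 1) + digitOf s ξ.natAbs j * s →
        digitOf s ξ.natAbs (j - 1) + digitOf s ξ.natAbs j * s ≤ s ^ 2 - 2 →
        ∀ A : Finset ℕ, A ⊆ Finset.range s → 0 ∈ A → 1 ∈ A →
          ‖gfun s A ξ (j + 1)‖ ≤ 1 - c₀ / (A.card * (s : ℝ) ^ 4) ∧
            1 - c₀ / (A.card * (s : ℝ) ^ 4) < 1 := by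
  refine ⟨4, four_pos, fun s hs ξ _ j hj hlo hhi A _ h0 h1 => ?_⟩
  obtain ⟨i, rfl⟩ : ∃ i, j = i + 1 := ⟨j - 1, by omega⟩
  rw [Nat.add_sub_cancel] at hlo hhi
  have hs0 : (0 : ℝ) < s := Nat.cast_pos.2 (by omega)
  have hr : (0 : ℝ) < A.card := Nat.cast_pos.2 (Finset.card_pos.2 ⟨0, h0⟩)
  obtain ⟨hf₁, hf₂⟩ := fract_div_pow_bounds hs hlo hhi
  have hpair : ‖1 + eneg ((ξ : ℝ) * (1 : ℕ) / (s : ℝ) ^ (i + 1 + 1))‖ ≤ 2 - 4 / (s : ℝ) ^ 4 := by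
    rw [← norm_one_add_eneg_abs, Nat.cast_one, mul_one, abs_div, abs_of_pos (pow_pos hs0 _),
      ← Int.cast_abs, ← Nat.cast_natAbs]
    convert norm_one_add_eneg_le (by positivity) hf₁ hf₂ using 1
    ring
  have hsum := norm_sum_le_card_sub (f := fun d : ℕ => eneg ((ξ : ℝ) * d / (s : ℝ) ^ (i + 1 + 1)))
    (fun d _ => (norm_eneg _).le) h0 h1 zero_ne_one (by simpa [eneg_zero] using hpair)
  have hδ : 0 < 4 / (A.card * (s : ℝ) ^ 4) := by positivity
  refine ⟨?_, by linarith⟩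
  rw [gfun, norm_mul, norm_inv, Complex.norm_natCast]
  calc (A.card : ℝ)⁻¹ * ‖∑ d ∈ A, eneg ((ξ : ℝ) * d / (s : ℝ) ^ (i + 1 + 1))‖
      ≤ (A.card : ℝ)⁻¹ * (A.card - 4 / (s : ℝ) ^ 4) := by gcongr
    _ = 1 - 4 / (A.card * (s : ℝ) ^ 4) := by field_simp
end

section
/- Let b ≥ 2 be an integer and let p be a prime that does not divide b. Then for every k ∈ ℕ, the multiplicative order of b modulo p^k satisfies ord_{p^k}(b) ≥ p^k / (2 b^p). -/
/-!
Let `n` be the order of `b` modulo `p ^ k`, so `p ^ k ∣ b ^ n - 1`. Pass to a power `c = b ^ t`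
with `t ≤ p` for which lifting the exponent applies: `t = φ p` for odd `p` (Fermat), and `t = 2`
for `p = 2` (then `4 ∣ b ^ 2 - 1`). Since `b ^ n - 1 ∣ c ^ n - 1`, lifting the exponent gives
`k ≤ v_p (c ^ n - 1) = v_p ((c - 1) * n)`, hence `p ^ k ≤ (c - 1) * n < b ^ p * n`.
-/

open Nat

lemma padicValNat_pow_totient_mul_sub_one {p b : ℕ} [hp : Fact p.Prime] (hodd : Odd p)
    (hb : 1 < b) (hpb : ¬ p ∣ b) {n : ℕ} (hn : n ≠ 0) :
    padicValNat p (b ^ (φ p * n) - 1) = padicValNat p ((b ^ φ p - 1) * n) := by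
  have hcop : b.Coprime p := Nat.coprime_comm.mp (hp.out.coprime_iff_not_dvd.mpr hpb)
  have hfermat : p ∣ b ^ φ p - 1 :=
    (Nat.modEq_iff_dvd' (Nat.one_le_pow _ _ (by omega))).mp (Nat.ModEq.pow_totient hcop).symm
  have hlt : 1 < b ^ φ p := Nat.one_lt_pow (Nat.totient_pos.mpr hp.out.pos).ne' hb
  rw [pow_mul, padicValNat.mul (by omega) hn]
  simpa using padicValNat.pow_sub_pow hodd hlt (by simpa using hfermat)
    (fun h => hpb (hp.out.dvd_of_dvd_pow h)) hn

lemma padicValNat_two_pow_two_mul_sub_one {b : ℕ} (hb : 1 < b) (hodd : ¬ 2 ∣ b) {n : ℕ}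
    (hn : n ≠ 0) :
    padicValNat 2 (b ^ (2 * n) - 1) = padicValNat 2 ((b ^ 2 - 1) * n) := by
  have hlte := padicValNat.pow_two_sub_one hb hodd (mul_ne_zero two_ne_zero hn) (even_two_mul n)
  rw [padicValNat.mul two_ne_zero hn, padicValNat.self one_lt_two] at hlte
  have hsq : b ^ 2 - 1 = (b + 1) * (b - 1) := by simpa using Nat.pow_two_sub_pow_two b 1
  rw [hsq, padicValNat.mul (mul_ne_zero (by omega) (by omega)) hn,
    padicValNat.mul (by omega) (by omega)]
  omega

lemma prime_pow_le_of_dvd_pow_sub_one {p b n k : ℕ} (hp : p.Prime) (hb : 1 < b) (hpb : ¬ p ∣ b)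
    (hn : n ≠ 0) (hdvd : p ^ k ∣ b ^ n - 1) : p ^ k ≤ b ^ p * n := by
  have := Fact.mk hp
  obtain ⟨t, ht, htp, hval⟩ : ∃ t, t ≠ 0 ∧ t ≤ p ∧
      padicValNat p (b ^ (t * n) - 1) = padicValNat p ((b ^ t - 1) * n) := by
    rcases hp.eq_two_or_odd' with rfl | hodd
    · exact ⟨2, two_ne_zero, le_rfl, padicValNat_two_pow_two_mul_sub_one hb hpb hn⟩
    · exact ⟨φ p, (totient_pos.mpr hp.pos).ne', totient_le p,
        padicValNat_pow_totient_mul_sub_one hodd hb hpb hn⟩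
  have hbt : 1 < b ^ t := Nat.one_lt_pow ht hb
  have hne : (b ^ t - 1) * n ≠ 0 := mul_ne_zero (by omega) hn
  have hdvd' : p ^ k ∣ (b ^ t - 1) * n := by
    have hbtn : 1 < b ^ (t * n) := Nat.one_lt_pow (mul_ne_zero ht hn) hb
    rw [padicValNat_dvd_iff_le hne, ← hval, ← padicValNat_dvd_iff_le (by omega)]
    exact hdvd.trans (Nat.pow_sub_one_dvd_pow_sub_one b (dvd_mul_left n t))
  calc p ^ k ≤ (b ^ t - 1) * n := Nat.le_of_dvd (Nat.pos_of_ne_zero hne) hdvd'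
    _ ≤ b ^ p * n := by
      gcongr
      exact (Nat.sub_le _ _).trans (Nat.pow_le_pow_right (by omega) htp)

theorem order_mod_prime_power_lower_bound_general (b p : ℕ) (hb : 2 ≤ b)
    (hp : p.Prime) (hpb : ¬ p ∣ b) (k : ℕ) :
    (p : ℝ) ^ k / (2 * (b : ℝ) ^ p) ≤ (orderOf (b : ZMod (p ^ k)) : ℝ) := by
  have := Fact.mk hp
  set n := orderOf (b : ZMod (p ^ k))
  have hunit : IsUnit (b : ZMod (p ^ k)) := (ZMod.isUnit_iff_coprime b _).mpr
    ((Nat.coprime_comm.mp (hp.coprime_iff_not_dvd.mpr hpb)).pow_right k)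
  have hn : n ≠ 0 := hunit.isOfFinOrder.orderOf_pos.ne'
  have hdvd : p ^ k ∣ b ^ n - 1 := by
    rw [← ZMod.natCast_eq_zero_iff, Nat.cast_sub (Nat.one_le_pow _ _ (by omega))]
    simp [n, pow_orderOf_eq_one]
  have key : p ^ k ≤ 2 * b ^ p * n := by
    have := prime_pow_le_of_dvd_pow_sub_one hp (by omega) hpb hn hdvd
    rw [mul_assoc]
    omega
  rw [div_le_iff₀ (by positivity), mul_comm]
  exact_mod_cast key

/-- Lemma 12.2 (Pramanik–Zhang, after Schmidt): if `b ≥ 2` and `p` is a prime not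
dividing `b`, then the multiplicative order of `b` modulo `p^k` satisfies
`ord_{p^k}(b) ≥ p^k / (2 b^p)` for every `k ≥ 1`. -/
theorem order_mod_prime_power_lower_bound (b p : ℕ) (hb : 2 ≤ b)
    (hp : p.Prime) (hpb : ¬ p ∣ b) (k : ℕ) (hk : 1 ≤ k) :
    (p : ℝ) ^ k / (2 * (b : ℝ) ^ p) ≤ (orderOf (b : ZMod (p ^ k)) : ℝ) :=
  order_mod_prime_power_lower_bound_general b p hb hp hpb k
end
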